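/- Let G1, G2 be groups and φ : G1 → G2 a bijection such that a multiset over G1 is a product-one sequence over G1 if and only if its termwise image under φ is a product-one sequence over G2. Suppose g1, g2, g3 in G1 satisfy: (i) φ(g1 g2) = φ(g1) φ(g2) and φ(g1 g3) = φ(g3) φ(g1); (ii) g1 g2 ≠ g2 g1 and g1 g3 ≠ g3 g1; (iii) g2 g3 = g3 g2. Then for every positive integer n: g1ⁿ g2 ≠ g2 g1ⁿ and g1ⁿ g3 ≠ g3 g1ⁿ; φ(g1ⁿ g2) = φ(g1ⁿ) φ(g2) and φ(g1ⁿ g3) = φ(g3) φ(g1ⁿ); and φ(g2 g1ⁿ) = φ(g2) φ(g1ⁿ) and φ(g3 g1ⁿ) = φ(g1ⁿ) φ(g3). -/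

import Mathlib

/-- A multiset `S` over a group `G` is a *product-one sequence* if its terms can be
ordered so that their product is `1`. -/
def IsProductOne {G : Type*} [Group G] (S : Multiset G) : Prop :=
  ∃ l : List G, (l : Multiset G) = S ∧ l.prod = 1

/-- The monoid `B(G)` of product-one sequences over `G`, as a submonoid of the free
abelian monoid (finite multisets under addition) over `G`. -/
def ProductOneSubmonoid (G : Type*) [Group G] : AddSubmonoid (Multiset G) where
  carrier := {S | IsProductOne S}
  zero_mem' := ⟨[], rfl, rfl⟩
  add_mem' := by
    rintro a b ⟨l1, rfl, p1⟩ ⟨l2, rfl, p2⟩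
    exact ⟨l1 ++ l2, by simp, by simp [p1, p2]⟩

/-!
Applied to `[a, b, (a * b)⁻¹]`, a bijection `φ` preserving product-one sequences satisfies
`φ (a * b) ∈ {φ a * φ b, φ b * φ a}`; applied also to `φ⁻¹`, this shows that `φ` preserves and
reflects commutation. Comparing the two factorizations `a * (aⁿ * u)` and `aⁿ⁺¹ * u`, the value
`φ (aⁿ * u) = φ (aⁿ) * φ u` propagates from `n` to `n + 1` as long as `aⁿ` and `u` do not commute.
If `g1ⁿ⁺¹` commuted with `g2`, the two factorizations `(g3 * g1ⁿ⁺¹) * g2` and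
`(g3 * g1) * (g1ⁿ * g2)` would force `φ (g1ⁿ)` to commute with `φ g3`, or `φ g1` with `φ g2`.
The same argument for `op ∘ φ`, which exchanges the roles of `g2` and `g3`, handles `g3`.
-/

open MulOpposite

section IsProductOne
variable {G : Type*} [Group G]

theorem isProductOne_pair_iff {a b : G} : IsProductOne ([a, b] : Multiset G) ↔ a * b = 1 := by
  refine ⟨fun ⟨l, hl, hp⟩ => ?_, fun h => ⟨[a, b], rfl, by simpa using h⟩⟩
  have hl : l ∈ [a, b].permutations := List.mem_permutations.2 (Multiset.coe_eq_coe.1 hl)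
  simp [List.permutations, List.permutationsAux, List.permutationsAux.rec] at hl
  rcases hl with rfl | rfl <;> simp_all [mul_eq_one_comm]

theorem isProductOne_triple_iff {a b c : G} :
    IsProductOne ([a, b, c] : Multiset G) ↔ a * b * c = 1 ∨ b * a * c = 1 := by
  refine ⟨fun ⟨l, hl, hp⟩ => ?_, ?_⟩
  · have hl : l ∈ [a, b, c].permutations := List.mem_permutations.2 (Multiset.coe_eq_coe.1 hl)
    simp [List.permutations, List.permutationsAux, List.permutationsAux.rec] at hl
    simp only [mul_assoc]
    rcases hl with rfl | rfl | rfl | rfl | rfl | rfl <;>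
      simp only [List.prod_cons, List.prod_nil, mul_one] at hp <;>
      first
      | tauto
      | (rw [mul_eq_one_comm, mul_assoc] at hp; tauto)
      | (rw [mul_eq_one_comm, mul_assoc, mul_eq_one_comm, mul_assoc] at hp; tauto)
  · rintro (h | h)
    · exact ⟨[a, b, c], rfl, by simpa [mul_assoc] using h⟩
    · exact ⟨[b, a, c], Multiset.coe_eq_coe.2 (List.Perm.swap a b [c]),
        by simpa [mul_assoc] using h⟩

theorem isProductOne_map_op_iff {S : Multiset G} : IsProductOne (S.map op) ↔ IsProductOne S := by
  constructor
  · rintro ⟨l, hl, hp⟩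
    refine ⟨(l.map unop).reverse, ?_, by rw [← unop_list_prod, hp, unop_one]⟩
    rw [Multiset.coe_reverse, ← Multiset.map_coe, hl, Multiset.map_map]
    simp
  · rintro ⟨l, rfl, hp⟩
    exact ⟨(l.map op).reverse, by simp, by rw [← op_list_prod, hp, op_one]⟩

end IsProductOne

def PreservesProductOne {G₁ G₂ : Type*} [Group G₁] [Group G₂] (φ : G₁ → G₂) : Prop :=
  ∀ S : Multiset G₁, IsProductOne S ↔ IsProductOne (S.map φ)

theorem preservesProductOne_op {G : Type*} [Group G] : PreservesProductOne (op : G → Gᵐᵒᵖ) :=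
  fun _ => isProductOne_map_op_iff.symm

namespace PreservesProductOne

variable {G₁ G₂ G₃ : Type*} [Group G₁] [Group G₂] [Group G₃] {φ : G₁ → G₂}

theorem comp {ψ : G₂ → G₃} (hψ : PreservesProductOne ψ) (hφ : PreservesProductOne φ) :
    PreservesProductOne (ψ ∘ φ) := fun S => by
  rw [hφ S, hψ, Multiset.map_map]

theorem ofBijective_symm (hφ : PreservesProductOne φ) (hbij : Function.Bijective φ) :
    PreservesProductOne (Equiv.ofBijective φ hbij).symm := fun S => by
  rw [hφ, Multiset.map_map]
  simp only [Function.comp_def, Equiv.ofBijective_apply_symm_apply, Multiset.map_id']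

theorem map_inv (hφ : PreservesProductOne φ) (a : G₁) : φ a⁻¹ = (φ a)⁻¹ := by
  have h : IsProductOne ([a, a⁻¹] : Multiset G₁) := isProductOne_pair_iff.2 (mul_inv_cancel a)
  rw [hφ, Multiset.map_coe] at h
  exact (inv_eq_of_mul_eq_one_right (isProductOne_pair_iff.1 h)).symm

theorem map_mul_eq_or (hφ : PreservesProductOne φ) (a b : G₁) :
    φ (a * b) = φ a * φ b ∨ φ (a * b) = φ b * φ a := by
  have h : IsProductOne ([a, b, (a * b)⁻¹] : Multiset G₁) :=
    isProductOne_triple_iff.2 (Or.inl (mul_inv_cancel _))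
  rw [hφ, Multiset.map_coe, List.map_cons, List.map_cons, List.map_singleton, hφ.map_inv,
    isProductOne_triple_iff, mul_inv_eq_one, mul_inv_eq_one] at h
  exact h.imp Eq.symm Eq.symm

theorem map_mul_of_commute (hφ : PreservesProductOne φ) (hbij : Function.Bijective φ)
    {a b : G₁} (hab : Commute a b) : φ (a * b) = φ a * φ b := by
  have h : (Equiv.ofBijective φ hbij).symm (φ a * φ b) = a * b := by
    rcases (hφ.ofBijective_symm hbij).map_mul_eq_or (φ a) (φ b) with h | h <;>
      simp [h, hab.eq]
  exact ((Equiv.symm_apply_eq _).1 h).symm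

theorem commute_map (hφ : PreservesProductOne φ) (hbij : Function.Bijective φ)
    {a b : G₁} (hab : Commute a b) : Commute (φ a) (φ b) := by
  have h := hφ.map_mul_of_commute hbij hab.symm
  rw [← hab.eq] at h
  exact (hφ.map_mul_of_commute hbij hab).symm.trans h

theorem commute_map_iff (hφ : PreservesProductOne φ) (hbij : Function.Bijective φ) {a b : G₁} :
    Commute (φ a) (φ b) ↔ Commute a b := by
  refine ⟨fun h => ?_, hφ.commute_map hbij⟩
  simpa using (hφ.ofBijective_symm hbij).commute_map (Equiv.bijective _) h

theorem map_mul_swap_of_map_mul (hφ : PreservesProductOne φ) (hbij : Function.Bijective φ)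
    {a b : G₁} (h : φ (a * b) = φ a * φ b) : φ (b * a) = φ b * φ a := by
  by_cases hab : Commute a b
  · exact hφ.map_mul_of_commute hbij hab.symm
  · exact (hφ.map_mul_eq_or b a).resolve_right fun h' => hab (hbij.1 (h.trans h'.symm))

theorem map_mul_swap_of_map_mul_rev (hφ : PreservesProductOne φ) (hbij : Function.Bijective φ)
    {a b : G₁} (h : φ (a * b) = φ b * φ a) : φ (b * a) = φ a * φ b := by
  by_cases hab : Commute a b
  · rw [← hab.eq]
    exact hφ.map_mul_of_commute hbij hab
  · exact (hφ.map_mul_eq_or b a).resolve_left fun h' => hab (hbij.1 (h.trans h'.symm))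

theorem map_pow_succ (hφ : PreservesProductOne φ) (hbij : Function.Bijective φ) (a : G₁) (n : ℕ) :
    φ (a ^ (n + 1)) = φ a * φ (a ^ n) := by
  rw [pow_succ']
  exact hφ.map_mul_of_commute hbij (Commute.self_pow a n)

theorem map_pow_succ' (hφ : PreservesProductOne φ) (hbij : Function.Bijective φ) (a : G₁) (n : ℕ) :
    φ (a ^ (n + 1)) = φ (a ^ n) * φ a := by
  rw [pow_succ]
  exact hφ.map_mul_of_commute hbij (Commute.pow_self a n)

theorem map_pow_succ_mul (hφ : PreservesProductOne φ) (hbij : Function.Bijective φ)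
    {a u : G₁} {n : ℕ} (hnc : ¬Commute (a ^ n) u) (h : φ (a ^ n * u) = φ (a ^ n) * φ u) :
    φ (a ^ (n + 1) * u) = φ (a ^ (n + 1)) * φ u := by
  rcases hφ.map_mul_eq_or (a ^ (n + 1)) u with h₁ | h₁
  · exact h₁
  rcases hφ.map_mul_eq_or a (a ^ n * u) with h₂ | h₂ <;> rw [← mul_assoc, ← pow_succ', h] at h₂
  · rw [h₂, hφ.map_pow_succ hbij, mul_assoc]
  · refine absurd ((hφ.commute_map_iff hbij).1 ?_) hnc
    have h₃ := h₁.symm.trans h₂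
    rw [hφ.map_pow_succ' hbij, ← mul_assoc] at h₃
    exact (mul_right_cancel h₃).symm

theorem map_pow_mul_of_map_mul (hφ : PreservesProductOne φ) (hbij : Function.Bijective φ)
    {a u : G₁} (h : φ (a * u) = φ a * φ u) {n : ℕ} (hn : 0 < n)
    (hnc : ∀ k, 0 < k → k < n → ¬Commute (a ^ k) u) : φ (a ^ n * u) = φ (a ^ n) * φ u := by
  induction n, hn using Nat.le_induction with
  | base => simpa using h
  | succ n hn ih =>
    exact hφ.map_pow_succ_mul hbij (hnc n hn (lt_add_one n))
      (ih fun k hk hkn => hnc k hk (hkn.trans (lt_add_one n)))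

theorem op_comp (hφ : PreservesProductOne φ) : PreservesProductOne (op ∘ φ) :=
  preservesProductOne_op.comp hφ

theorem map_pow_mul_of_map_mul_rev (hφ : PreservesProductOne φ) (hbij : Function.Bijective φ)
    {a u : G₁} (h : φ (a * u) = φ u * φ a) {n : ℕ} (hn : 0 < n)
    (hnc : ∀ k, 0 < k → k < n → ¬Commute (a ^ k) u) : φ (a ^ n * u) = φ u * φ (a ^ n) := by
  have := hφ.op_comp.map_pow_mul_of_map_mul (opEquiv.bijective.comp hbij) (by simp [h]) hn hnc
  exact op_injective (by simpa using this)

theorem not_commute_pow_succ (hφ : PreservesProductOne φ) (hbij : Function.Bijective φ)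
    {a b c : G₁} {n : ℕ} (hbc : Commute b c) (hab : ¬Commute a b) (hanc : ¬Commute (a ^ n) c)
    (hφca : φ (c * a) = φ a * φ c) (hφcan : φ (c * a ^ (n + 1)) = φ (a ^ (n + 1)) * φ c)
    (hφanb : φ (a ^ n * b) = φ (a ^ n) * φ b) : ¬Commute (a ^ (n + 1)) b := by
  intro hcomm
  have hpow := hφ.map_pow_succ hbij a n
  have hφa_an : Commute (φ a) (φ (a ^ n)) := hφ.commute_map hbij (Commute.self_pow a n)
  have hφan1_b : Commute (φ a * φ (a ^ n)) (φ b) := hpow ▸ hφ.commute_map hbij hcomm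
  have hφbc : Commute (φ b) (φ c) := hφ.commute_map hbij hbc
  have hφt : φ (c * a ^ (n + 1) * b) = φ a * φ (a ^ n) * φ b * φ c := by
    rcases hφ.map_mul_eq_or (c * a ^ (n + 1)) b with h | h <;> rw [h, hφcan, hpow]
    · rw [mul_assoc _ (φ c), ← hφbc.eq, ← mul_assoc]
    · rw [← mul_assoc, hφan1_b.eq]
  have hsplit : c * a ^ (n + 1) * b = c * a * (a ^ n * b) := by
    rw [pow_succ']
    simp only [mul_assoc]
  rcases hφ.map_mul_eq_or (c * a) (a ^ n * b) with h | h <;> rw [← hsplit, hφt, hφca, hφanb] at h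
  · refine hanc ((hφ.commute_map_iff hbij).1 ?_)
    simp only [mul_assoc, mul_right_inj] at h
    rwa [hφbc.eq, ← mul_assoc, ← mul_assoc, mul_left_inj] at h
  · refine hab ((hφ.commute_map_iff hbij).1 ?_)
    rw [← mul_assoc, mul_left_inj, hφa_an.eq] at h
    simp only [mul_assoc, mul_right_inj] at h
    exact h

theorem map_pow_mul_and_mul_pow (hφ : PreservesProductOne φ) (hbij : Function.Bijective φ)
    {a b c : G₁} (hφab : φ (a * b) = φ a * φ b) (hφac : φ (a * c) = φ c * φ a) {n : ℕ}
    (hn : 0 < n) (hnc : ∀ k, 0 < k → k < n → ¬Commute (a ^ k) b ∧ ¬Commute (a ^ k) c) :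
    (φ (a ^ n * b) = φ (a ^ n) * φ b ∧ φ (a ^ n * c) = φ c * φ (a ^ n)) ∧
      (φ (b * a ^ n) = φ b * φ (a ^ n) ∧ φ (c * a ^ n) = φ (a ^ n) * φ c) := by
  have hφanb := hφ.map_pow_mul_of_map_mul hbij hφab hn fun k hk hkn => (hnc k hk hkn).1
  have hφanc := hφ.map_pow_mul_of_map_mul_rev hbij hφac hn fun k hk hkn => (hnc k hk hkn).2
  exact ⟨⟨hφanb, hφanc⟩, hφ.map_mul_swap_of_map_mul hbij hφanb,
    hφ.map_mul_swap_of_map_mul_rev hbij hφanc⟩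

theorem not_commute_pow (hφ : PreservesProductOne φ) (hbij : Function.Bijective φ)
    {a b c : G₁} (hφab : φ (a * b) = φ a * φ b) (hφac : φ (a * c) = φ c * φ a)
    (hab : ¬Commute a b) (hac : ¬Commute a c) (hbc : Commute b c) {n : ℕ} (hn : 0 < n) :
    ¬Commute (a ^ n) b ∧ ¬Commute (a ^ n) c := by
  induction n using Nat.strong_induction_on with
  | _ n ih =>
    obtain _ | _ | n := n
    · omega
    · simpa using ⟨hab, hac⟩
    have values {m : ℕ} (hm : 0 < m) (hmn : m ≤ n + 2) :=
      hφ.map_pow_mul_and_mul_pow hbij hφab hφac hm fun k hk hkm => ih k (by omega) hk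
    obtain ⟨⟨hφanb, hφanc⟩, -⟩ := values n.succ_pos (by omega)
    obtain ⟨-, hφban, hφcan⟩ := values (n + 1).succ_pos le_rfl
    obtain ⟨hanb, hanc⟩ := ih (n + 1) (lt_add_one _) n.succ_pos
    constructor
    · exact hφ.not_commute_pow_succ hbij hbc hab hanc
        (hφ.map_mul_swap_of_map_mul_rev hbij hφac) hφcan hφanb
    · exact hφ.op_comp.not_commute_pow_succ (opEquiv.bijective.comp hbij) hbc.symm hac hanb
        (by simp [hφ.map_mul_swap_of_map_mul hbij hφab]) (by simp [hφban]) (by simp [hφanc])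

end PreservesProductOne

theorem A5_induction (G1 G2 : Type*) [Group G1] [Group G2]
    (φ : G1 → G2) (hbij : Function.Bijective φ)
    (h : ∀ S : Multiset G1, IsProductOne S ↔ IsProductOne (S.map φ))
    (g1 g2 g3 : G1)
    (h12 : φ (g1 * g2) = φ g1 * φ g2) (h13 : φ (g1 * g3) = φ g3 * φ g1)
    (hne12 : g1 * g2 ≠ g2 * g1) (hne13 : g1 * g3 ≠ g3 * g1)
    (hcomm : g2 * g3 = g3 * g2) :
    ∀ n : ℕ, 0 < n →
      (g1 ^ n * g2 ≠ g2 * g1 ^ n ∧ g1 ^ n * g3 ≠ g3 * g1 ^ n) ∧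
      (φ (g1 ^ n * g2) = φ (g1 ^ n) * φ g2 ∧ φ (g1 ^ n * g3) = φ g3 * φ (g1 ^ n)) ∧
      (φ (g2 * g1 ^ n) = φ g2 * φ (g1 ^ n) ∧ φ (g3 * g1 ^ n) = φ (g1 ^ n) * φ g3) := by
  intro n hn
  have hφ : PreservesProductOne φ := h
  have hnc {k : ℕ} (hk : 0 < k) := hφ.not_commute_pow hbij h12 h13 hne12 hne13 hcomm hk
  exact ⟨hnc hn, hφ.map_pow_mul_and_mul_pow hbij h12 h13 hn fun k hk _ => hnc hk⟩
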